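/- Let φ be a trace-valued (σ,ε)-sesquilinear form on V possessing a maximal totally isotropic subspace of finite dimension. Then for every maximal totally isotropic subspace A of V there exists a maximal totally isotropic subspace B of V such that A ∩ B = Rad(φ). -/

import Mathlib

open MulOpposite

variable {K : Type*} [DivisionRing K]

/-- `σ` is an anti-automorphism of the division ring `K`. -/
def IsAntiAuto (σ : K → K) : Prop :=
  Function.Bijective σ ∧ (∀ a b : K, σ (a + b) = σ a + σ b) ∧
    ∀ a b : K, σ (a * b) = σ b * σ a

/-- `(σ, ε)` is an admissible pair: `σ` is an anti-automorphism, `ε ≠ 0`,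
`σ ε = ε⁻¹` and `σ ∘ σ` is conjugation by `ε`. -/
def IsAdmissiblePair (σ : K → K) (ε : K) : Prop :=
  IsAntiAuto σ ∧ ε ≠ 0 ∧ σ ε = ε⁻¹ ∧ ∀ t : K, σ (σ t) = ε * t * ε⁻¹

variable {V : Type*} [AddCommGroup V] [Module Kᵐᵒᵖ V]

/-- `φ` is a reflexive `(σ, ε)`-sesquilinear form on the right `K`-vector space `V`
(a right `K`-vector space is a left `Kᵐᵒᵖ`-vector space; right scalar multiplication
of `x` by `α` is `op α • x`). -/
def IsSesq (σ : K → K) (ε : K) (φ : V → V → K) : Prop :=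
  (∀ x y z : V, φ (x + y) z = φ x z + φ y z) ∧
  (∀ x y z : V, φ x (y + z) = φ x y + φ x z) ∧
  (∀ (α : K) (x y : V), φ (op α • x) y = σ α * φ x y) ∧
  (∀ (β : K) (x y : V), φ x (op β • y) = φ x y * β) ∧
  ∀ x y : V, φ y x = σ (φ x y) * ε

/-- A subspace `S` of `V` is totally isotropic for `φ` if `φ` vanishes identically on it. -/
def IsTotIso (φ : V → V → K) (S : Submodule Kᵐᵒᵖ V) : Prop :=
  ∀ x ∈ S, ∀ y ∈ S, φ x y = 0

/-- A maximal totally isotropic subspace: totally isotropic and maximal under inclusion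
among totally isotropic subspaces. -/
def IsMaxTotIso (φ : V → V → K) (S : Submodule Kᵐᵒᵖ V) : Prop :=
  IsTotIso φ S ∧ ∀ T : Submodule Kᵐᵒᵖ V, IsTotIso φ T → S ≤ T → T = S

/-- `φ` is trace-valued: every `φ(x,x)` is of the form `t + σ(t)ε`. -/
def IsTraceValued (σ : K → K) (ε : K) (φ : V → V → K) : Prop :=
  ∀ x : V, ∃ t : K, φ x x = t + σ t * ε

/-!
Zorn's lemma gives a totally isotropic subspace `B` maximal among those with `A ∩ B ⊆ Rad φ`.
Because some maximal totally isotropic subspace is finite-dimensional, so is every totally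
isotropic subspace, and for finite-dimensional `B` the double orthogonal of `B` is `B + Rad φ`.
Hence if `d ∈ A` is orthogonal to `B` but not radical, some `x ⊥ B` has `φ(d, x) ≠ 0`;
trace-valuedness lets us correct `x` by a multiple of `d` to an isotropic `w ⊥ B` with
`φ(d, w) = 1`, and `B + ⟨w⟩` still meets `A` only in `Rad φ`, contradicting the maximality of `B`.
So every totally isotropic `T ⊇ B` meets `A` inside `Rad φ`, which forces `T = B`.
-/

theorem LinearMap.exists_comp_eq_of_ker_le {D U V W : Type*} [DivisionRing D]
    [AddCommGroup U] [Module D U] [AddCommGroup V] [Module D V] [AddCommGroup W] [Module D W]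
    (f : V →ₗ[D] W) (g : V →ₗ[D] U) (h : ker f ≤ ker g) : ∃ ℓ : W →ₗ[D] U, ℓ ∘ₗ f = g := by
  obtain ⟨L, hL⟩ := ((ker f).liftQ f le_rfl).exists_leftInverse_of_injective
    ((ker f).ker_liftQ_eq_bot f le_rfl le_rfl)
  refine ⟨(ker f).liftQ g h ∘ₗ L, LinearMap.ext fun x => ?_⟩
  have hLx := LinearMap.congr_fun hL (Submodule.Quotient.mk x)
  simp only [LinearMap.comp_apply, Submodule.liftQ_apply, LinearMap.id_apply] at hLx
  simp [hLx]

theorem Submodule.exists_mem_of_mem_sSup_of_isChain {R M : Type*} [Semiring R]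
    [AddCommMonoid M] [Module R M] {c : Set (Submodule R M)} (hc : IsChain (· ≤ ·) c)
    (hne : c.Nonempty) {x y : M} (hx : x ∈ sSup c) (hy : y ∈ sSup c) :
    ∃ S ∈ c, x ∈ S ∧ y ∈ S := by
  obtain ⟨S, hS, hxS⟩ := (mem_sSup_of_directed hne hc.directedOn).mp hx
  obtain ⟨T, hT, hyT⟩ := (mem_sSup_of_directed hne hc.directedOn).mp hy
  obtain ⟨U, hU, hSU, hTU⟩ := hc.directedOn S hS T hT
  exact ⟨U, hU, hSU hxS, hTU hyT⟩

section

variable {σ : K → K} {ε : K} {φ : V → V → K}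

theorem IsAntiAuto.map_zero (hσ : IsAntiAuto σ) : σ 0 = 0 := by
  simpa using hσ.2.1 0 0

theorem IsAntiAuto.map_one (hσ : IsAntiAuto σ) : σ 1 = 1 := by
  obtain ⟨a, ha⟩ := hσ.1.2 1
  simpa [ha] using (hσ.2.2 1 a).symm

theorem IsAdmissiblePair.map_inv_eps (h : IsAdmissiblePair σ ε) : σ ε⁻¹ = ε := by
  have h1 := h.1.2.2 ε ε⁻¹
  rwa [mul_inv_cancel₀ h.2.1, h.1.map_one, h.2.2.1, eq_comm, mul_inv_eq_one₀ h.2.1] at h1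

namespace IsSesq

theorem map_add_left (hφ : IsSesq σ ε φ) (x y z : V) : φ (x + y) z = φ x z + φ y z :=
  hφ.1 x y z

theorem map_add_right (hφ : IsSesq σ ε φ) (x y z : V) : φ x (y + z) = φ x y + φ x z :=
  hφ.2.1 x y z

theorem apply_swap (hφ : IsSesq σ ε φ) (x y : V) : φ y x = σ (φ x y) * ε :=
  hφ.2.2.2.2 x y

theorem map_smul_left (hφ : IsSesq σ ε φ) (c : Kᵐᵒᵖ) (x y : V) :
    φ (c • x) y = σ c.unop * φ x y :=
  hφ.2.2.1 c.unop x y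

theorem map_smul_right (hφ : IsSesq σ ε φ) (c : Kᵐᵒᵖ) (x y : V) :
    φ x (c • y) = φ x y * c.unop :=
  hφ.2.2.2.1 c.unop x y

def leftHom (hφ : IsSesq σ ε φ) (y : V) : V →+ K :=
  AddMonoidHom.mk' (φ · y) fun a b => hφ.map_add_left a b y

/-- `φ` is `K`-linear on the right, so pairing on the right is `Kᵐᵒᵖ`-linear without any
twist by `σ`. -/
def opRight (hφ : IsSesq σ ε φ) (x : V) : V →ₗ[Kᵐᵒᵖ] Kᵐᵒᵖ where
  toFun y := op (φ x y)
  map_add' a b := by rw [hφ.map_add_right, op_add]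
  map_smul' c y := by rw [hφ.map_smul_right, op_mul, op_unop]; rfl

theorem opRight_apply (hφ : IsSesq σ ε φ) (x y : V) : hφ.opRight x y = op (φ x y) := rfl

theorem mem_ker_opRight (hφ : IsSesq σ ε φ) {x y : V} :
    y ∈ LinearMap.ker (hφ.opRight x) ↔ φ x y = 0 := by
  rw [LinearMap.mem_ker, opRight_apply, op_eq_zero_iff]

theorem map_sub_left (hφ : IsSesq σ ε φ) (a b y : V) : φ (a - b) y = φ a y - φ b y :=
  map_sub (hφ.leftHom y) a b

theorem map_sub_right (hφ : IsSesq σ ε φ) (x a b : V) : φ x (a - b) = φ x a - φ x b :=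
  op_injective <| by simpa only [opRight_apply, op_sub] using map_sub (hφ.opRight x) a b

theorem eq_zero_symm (hσ : IsAntiAuto σ) (hφ : IsSesq σ ε φ) {x y : V} (h : φ x y = 0) :
    φ y x = 0 := by
  rw [hφ.apply_swap, h, hσ.map_zero, zero_mul]

def leftKer (hφ : IsSesq σ ε φ) (y : V) : Submodule Kᵐᵒᵖ V where
  carrier := {x | φ x y = 0}
  add_mem' {a b} ha hb := by simp_all [hφ.map_add_left]
  zero_mem' := (hφ.leftHom y).map_zero
  smul_mem' c x hx := by simp_all [hφ.map_smul_left]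

theorem mem_leftKer (hφ : IsSesq σ ε φ) {x y : V} : x ∈ hφ.leftKer y ↔ φ x y = 0 := Iff.rfl

theorem isTotIso_span (hφ : IsSesq σ ε φ) {s : Set V} (h : ∀ x ∈ s, ∀ y ∈ s, φ x y = 0) :
    IsTotIso φ (Submodule.span Kᵐᵒᵖ s) := by
  have hleft : ∀ y ∈ s, ∀ x ∈ Submodule.span Kᵐᵒᵖ s, φ x y = 0 := fun y hy =>
    Submodule.span_le.mpr fun x hx => hφ.mem_leftKer.mpr (h x hx y hy)
  exact fun x hx y hy => hφ.mem_ker_opRight.mp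
    (Submodule.span_le.mpr (fun y hy => hφ.mem_ker_opRight.mpr (hleft y hy x hx)) hy)

theorem isTotIso_sup_span_singleton (hσ : IsAntiAuto σ) (hφ : IsSesq σ ε φ)
    {S : Submodule Kᵐᵒᵖ V} (hS : IsTotIso φ S) {x : V} (hxx : φ x x = 0)
    (hx : ∀ s ∈ S, φ s x = 0) : IsTotIso φ (S ⊔ Submodule.span Kᵐᵒᵖ {x}) := by
  rw [← Submodule.span_eq S, ← Submodule.span_union]
  refine hφ.isTotIso_span ?_
  rintro a (ha | rfl) b (hb | rfl)
  exacts [hS a ha b hb, hx a ha, eq_zero_symm hσ hφ (hx b hb), hxx]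

def pairing (hφ : IsSesq σ ε φ) (t : Finset V) : V →ₗ[Kᵐᵒᵖ] (t → Kᵐᵒᵖ) :=
  LinearMap.pi fun i => hφ.opRight i

theorem pairing_eq_zero_iff (hφ : IsSesq σ ε φ) (t : Finset V) {x : V} :
    hφ.pairing t x = 0 ↔ ∀ y ∈ Submodule.span Kᵐᵒᵖ (t : Set V), φ y x = 0 := by
  constructor
  · intro h
    refine fun y hy => hφ.mem_leftKer.mp (Submodule.span_le.mpr (fun i hi => ?_) hy)
    exact hφ.mem_leftKer.mpr (by simpa [pairing, opRight_apply] using congr_fun h ⟨i, hi⟩)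
  · intro h
    ext i
    simpa [pairing, opRight_apply] using h i (Submodule.subset_span i.2)

theorem exists_mem_forall_sub_eq_zero (hσ : Function.Surjective σ)
    (hφ : IsSesq σ ε φ) {B : Submodule Kᵐᵒᵖ V} [FiniteDimensional Kᵐᵒᵖ B] {d : V}
    (h : ∀ x, (∀ b ∈ B, φ b x = 0) → φ d x = 0) : ∃ b ∈ B, ∀ x, φ (d - b) x = 0 := by
  classical
  obtain ⟨t, ht⟩ : B.FG := (Submodule.fg_iff_finiteDimensional B).mpr ‹_›
  have hker : LinearMap.ker (hφ.pairing t) ≤ LinearMap.ker (hφ.opRight d) := fun x hx =>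
    hφ.mem_ker_opRight.mpr (h x (ht ▸ (hφ.pairing_eq_zero_iff t).mp hx))
  -- `op (φ d ·)` factors through the pairing with `t`, i.e. is a combination of the `op (φ i ·)`
  obtain ⟨ℓ, hℓ⟩ := LinearMap.exists_comp_eq_of_ker_le _ _ hker
  set u : t → Kᵐᵒᵖ := fun i => ℓ fun j => if i = j then 1 else 0
  choose α hα using fun i => hσ (unop (u i))
  refine ⟨∑ i : t, op (α i) • (i : V),
    B.sum_mem fun i _ => B.smul_mem _ (ht ▸ Submodule.subset_span i.2), fun x => ?_⟩
  have hx : op (φ d x) = ∑ i : t, op (φ i x) * u i := by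
    rw [← hφ.opRight_apply, ← hℓ, LinearMap.comp_apply, LinearMap.pi_apply_eq_sum_univ]
    rfl
  rw [hφ.map_sub_left, sub_eq_zero, ← op_inj, hx]
  change _ = op (hφ.leftHom x _)
  rw [map_sum, Finset.op_sum]
  refine Finset.sum_congr rfl fun i _ => ?_
  simp [leftHom, hφ.map_smul_left, hα]

theorem exists_isotropic_of_ne_zero (hpair : IsAdmissiblePair σ ε) (hφ : IsSesq σ ε φ)
    (htv : IsTraceValued σ ε φ) {d x : V} (hd : φ d d = 0) (hdx : φ d x ≠ 0) :
    ∃ w ∈ Submodule.span Kᵐᵒᵖ {x, d}, φ d w = 1 ∧ φ w w = 0 := by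
  set w₁ := op (φ d x)⁻¹ • x
  obtain ⟨t, ht⟩ := htv w₁
  have hdw₁ : φ d w₁ = 1 := by rw [hφ.map_smul_right, unop_op, mul_inv_cancel₀ hdx]
  have hw₁d : φ w₁ d = ε := by rw [hφ.apply_swap d w₁, hdw₁, hpair.1.map_one, one_mul]
  refine ⟨w₁ - op (ε⁻¹ * t) • d, Submodule.sub_mem _
    (Submodule.smul_mem _ _ (Submodule.subset_span (by simp)))
    (Submodule.smul_mem _ _ (Submodule.subset_span (by simp))), ?_, ?_⟩
  · rw [hφ.map_sub_right, hdw₁, hφ.map_smul_right, hd, zero_mul, sub_zero]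
  · -- the correction by `d (ε⁻¹ t)` cancels `φ w₁ w₁ = t + σ t ε`, using `σ ε⁻¹ = ε`
    simp only [hφ.map_sub_left, hφ.map_sub_right, hφ.map_smul_left, hφ.map_smul_right, unop_op,
      ht, hdw₁, hw₁d, hd, hpair.1.2.2, hpair.map_inv_eps, mul_inv_cancel_left₀ hpair.2.1]
    noncomm_ring

end IsSesq

theorem IsMaxTotIso.mem_of_forall (hσ : IsAntiAuto σ) (hφ : IsSesq σ ε φ)
    {M : Submodule Kᵐᵒᵖ V} (hM : IsMaxTotIso φ M) {x : V} (hxx : φ x x = 0)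
    (hx : ∀ m ∈ M, φ m x = 0) : x ∈ M := by
  rw [← hM.2 _ (hφ.isTotIso_sup_span_singleton hσ hM.1 hxx hx) le_sup_left]
  exact Submodule.mem_sup_right (Submodule.mem_span_singleton_self x)

theorem IsMaxTotIso.le_of_forall (hσ : IsAntiAuto σ) (hφ : IsSesq σ ε φ)
    {A : Submodule Kᵐᵒᵖ V} (hA : IsMaxTotIso φ A) {R : Submodule Kᵐᵒᵖ V}
    (hR : ∀ a ∈ R, ∀ x, φ a x = 0) : R ≤ A := fun r hr =>
  hA.mem_of_forall hσ hφ (hR r hr r) fun m _ => hφ.eq_zero_symm hσ (hR r hr m)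

theorem IsMaxTotIso.finiteDimensional_of_isTotIso (hσ : IsAntiAuto σ) (hφ : IsSesq σ ε φ)
    {M : Submodule Kᵐᵒᵖ V} (hM : IsMaxTotIso φ M) [FiniteDimensional Kᵐᵒᵖ M]
    {S : Submodule Kᵐᵒᵖ V} (hS : IsTotIso φ S) : FiniteDimensional Kᵐᵒᵖ S := by
  obtain ⟨t, ht⟩ : M.FG := (Submodule.fg_iff_finiteDimensional M).mpr ‹_›
  have hker : S ⊓ LinearMap.ker (hφ.pairing t) ≤ M := fun x ⟨hxS, hxK⟩ =>
    hM.mem_of_forall hσ hφ (hS x hxS x hxS) (ht ▸ (hφ.pairing_eq_zero_iff t).mp hxK)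
  have := Submodule.finiteDimensional_of_le hker
  exact (Submodule.fg_iff_finiteDimensional _).mp <|
    Submodule.fg_of_fg_map_of_fg_inf_ker (hφ.pairing t)
    ((Submodule.fg_iff_finiteDimensional _).mpr inferInstance)
    ((Submodule.fg_iff_finiteDimensional _).mpr inferInstance)

theorem exists_maximal_isTotIso_inf_le (A : Submodule Kᵐᵒᵖ V) {R : Submodule Kᵐᵒᵖ V}
    (hR : IsTotIso φ R) : ∃ B, R ≤ B ∧ Maximal (fun S => IsTotIso φ S ∧ A ⊓ S ≤ R) B := by
  refine zorn_le_nonempty₀ {S | IsTotIso φ S ∧ A ⊓ S ≤ R} (fun c hcs hc S hS => ?_) R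
    ⟨hR, inf_le_right⟩
  refine ⟨sSup c, ⟨fun x hx y hy => ?_, fun a ⟨haA, haS⟩ => ?_⟩, fun _ => le_sSup⟩
  · obtain ⟨T, hT, hxT, hyT⟩ := Submodule.exists_mem_of_mem_sSup_of_isChain hc ⟨S, hS⟩ hx hy
    exact (hcs hT).1 x hxT y hyT
  · obtain ⟨T, hT, haT, -⟩ := Submodule.exists_mem_of_mem_sSup_of_isChain hc ⟨S, hS⟩ haS haS
    exact (hcs hT).2 ⟨haA, haT⟩

theorem mem_of_maximal_isTotIso_inf_le (hpair : IsAdmissiblePair σ ε) (hφ : IsSesq σ ε φ)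
    (htv : IsTraceValued σ ε φ) {A R B : Submodule Kᵐᵒᵖ V}
    (hR : ∀ a, (∀ x, φ a x = 0) → a ∈ R) (hA : IsTotIso φ A) [FiniteDimensional Kᵐᵒᵖ B]
    (hRB : R ≤ B) (hB : Maximal (fun S => IsTotIso φ S ∧ A ⊓ S ≤ R) B) {d : V} (hdA : d ∈ A)
    (hdB : ∀ b ∈ B, φ d b = 0) : d ∈ R := by
  by_cases hsep : ∀ x, (∀ b ∈ B, φ b x = 0) → φ d x = 0
  · obtain ⟨b, hb, hdb⟩ := hφ.exists_mem_forall_sub_eq_zero hpair.1.1.2 hsep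
    have hdB' : d ∈ B := by simpa using B.add_mem (hRB (hR _ hdb)) hb
    exact hB.prop.2 ⟨hdA, hdB'⟩
  obtain ⟨x, hxB, hdx⟩ : ∃ x, (∀ b ∈ B, φ b x = 0) ∧ φ d x ≠ 0 := by simpa using hsep
  obtain ⟨w, hw, hdw, hww⟩ := hφ.exists_isotropic_of_ne_zero hpair htv (hA d hdA d hdA) hdx
  have hwB : ∀ b ∈ B, φ b w = 0 := by
    refine fun b hb => hφ.mem_ker_opRight.mp (Submodule.span_le.mpr ?_ hw)
    rintro y (rfl | rfl)
    exacts [hφ.mem_ker_opRight.mpr (hxB b hb),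
      hφ.mem_ker_opRight.mpr (hφ.eq_zero_symm hpair.1 (hdB b hb))]
  have hAS : A ⊓ (B ⊔ Submodule.span Kᵐᵒᵖ {w}) ≤ R := by
    rintro a ⟨haA, haS⟩
    obtain ⟨b, hb, _, hc, rfl⟩ := Submodule.mem_sup.mp haS
    obtain ⟨c, rfl⟩ := Submodule.mem_span_singleton.mp hc
    have hc0 : c = 0 := by
      have hda := hA d hdA _ haA
      rwa [hφ.map_add_right, hdB b hb, hφ.map_smul_right, hdw, one_mul, zero_add,
        unop_eq_zero_iff] at hda
    rw [hc0, zero_smul, add_zero] at haA ⊢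
    exact hB.prop.2 ⟨haA, hb⟩
  have hwB' : w ∈ B := hB.2 ⟨hφ.isTotIso_sup_span_singleton hpair.1 hB.prop.1 hww hwB, hAS⟩
    le_sup_left (Submodule.mem_sup_right (Submodule.mem_span_singleton_self w))
  exact absurd (hdB w hwB') (hdw ▸ one_ne_zero)

theorem isMaxTotIso_of_maximal_isTotIso_inf_le (hpair : IsAdmissiblePair σ ε)
    (hφ : IsSesq σ ε φ) (htv : IsTraceValued σ ε φ) {A R B : Submodule Kᵐᵒᵖ V}
    (hR : ∀ a, (∀ x, φ a x = 0) → a ∈ R) (hA : IsTotIso φ A) [FiniteDimensional Kᵐᵒᵖ B]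
    (hRB : R ≤ B) (hB : Maximal (fun S => IsTotIso φ S ∧ A ⊓ S ≤ R) B) : IsMaxTotIso φ B := by
  refine ⟨hB.prop.1, fun T hT hBT => le_antisymm (hB.2 ⟨hT, fun d hd => ?_⟩ hBT) hBT⟩
  exact mem_of_maximal_isTotIso_inf_le hpair hφ htv hR hA hRB hB hd.1
    fun b hb => hT d hd.2 b (hBT hb)

end

/-- If `φ` is trace-valued and possesses a maximal totally isotropic
subspace of finite dimension, then for every maximal totally isotropic subspace `A`
there exists a maximal totally isotropic subspace `B` with `A ∩ B = Rad(φ)`. -/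
theorem stmt_9 (σ : K → K) (ε : K) (hpair : IsAdmissiblePair σ ε)
    (φ : V → V → K) (hφ : IsSesq σ ε φ) (htv : IsTraceValued σ ε φ)
    (hex : ∃ M : Submodule Kᵐᵒᵖ V, IsMaxTotIso φ M ∧ FiniteDimensional Kᵐᵒᵖ ↥M)
    (R : Submodule Kᵐᵒᵖ V) (hR : (R : Set V) = {a : V | ∀ x : V, φ a x = 0})
    (A : Submodule Kᵐᵒᵖ V) (hA : IsMaxTotIso φ A) :
    ∃ B : Submodule Kᵐᵒᵖ V, IsMaxTotIso φ B ∧ A ⊓ B = R := by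
  obtain ⟨M, hM, hMfd⟩ := hex
  have hRrad (a : V) : a ∈ R ↔ ∀ x, φ a x = 0 := Set.ext_iff.mp hR a
  obtain ⟨B, hRB, hB⟩ := exists_maximal_isTotIso_inf_le A fun a ha b _ => (hRrad a).mp ha b
  have := hM.finiteDimensional_of_isTotIso hpair.1 hφ hB.prop.1
  have hRA : R ≤ A := hA.le_of_forall hpair.1 hφ fun a => (hRrad a).mp
  exact ⟨B, isMaxTotIso_of_maximal_isTotIso_inf_le hpair hφ htv (fun a => (hRrad a).mpr) hA.1
    hRB hB, le_antisymm hB.prop.2 (le_inf hRA hRB)⟩
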